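/- arXiv:1302.1132 — 3 statements merged into one kernel-verified Lean document; each statement's English description precedes it below -/
import Mathlib

section
/- For c ≥ 2 and τ ∈ (1, 3/2], the inequality ρ(x) > r(x) := -τx / (1 + 0.5(1 - 2/c²)x) holds for all x > 0. -/
noncomputable def f (c x : ℝ) : ℝ := (-c + Real.sqrt (c^2 + 4*x)) / 2
noncomputable def ρ (c τ x : ℝ) : ℝ := τ * c * f c (Real.exp (-x) - 1)

lemma lemA {t : ℝ} (ht : 0 < t) : 2 - t < (2 + t) * Real.exp (-t) := by
  have hmono : StrictMonoOn (fun u : ℝ => (2 + u) * Real.exp (-u) + u - 2) (Set.Ici 0) := by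
    apply strictMonoOn_of_deriv_pos (convex_Ici 0)
    · fun_prop
    · intro s hs
      rw [interior_Ici] at hs
      have h1 : HasDerivAt (fun u : ℝ => Real.exp (-u)) (-Real.exp (-s)) s := by
        simpa using (hasDerivAt_neg s).exp
      have h2 : HasDerivAt (fun u : ℝ => 2 + u) 1 s := by
        simpa using (hasDerivAt_id s).const_add (2:ℝ)
      have h3 : HasDerivAt (fun u : ℝ => (2 + u) * Real.exp (-u) + u - 2)
          (1 * Real.exp (-s) + (2 + s) * -Real.exp (-s) + 1) s := by
        exact ((h2.mul h1).add (hasDerivAt_id s)).sub_const 2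
      rw [h3.deriv]
      have he : s + 1 < Real.exp s := Real.add_one_lt_exp (ne_of_gt hs)
      have hp : Real.exp s * Real.exp (-s) = 1 := by
        rw [← Real.exp_add]; simp
      nlinarith [mul_lt_mul_of_pos_right he (Real.exp_pos (-s)), Real.exp_pos (-s)]
  have key := hmono (Set.self_mem_Ici) (Set.mem_Ici.mpr ht.le) ht
  norm_num at key
  linarith

set_option maxHeartbeats 1000000 in
theorem stmt7 (c τ : ℝ) (hc : 2 ≤ c) (hτ : τ ∈ Set.Ioc (1 : ℝ) (3/2)) :
    ∀ x : ℝ, 0 < x → ρ c τ x > -τ * x / (1 + 0.5 * (1 - 2/c^2) * x) := by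
  obtain ⟨hτ1, hτ2⟩ := hτ
  intro x hx
  have hc0 : (0:ℝ) < c := by linarith
  have hc4 : (4:ℝ) ≤ c^2 := by nlinarith
  simp only [ρ, f]
  set w : ℝ := Real.exp (-x) - 1 with hw
  have hw1 : -1 < w := by rw [hw]; linarith [Real.exp_pos (-x)]
  have hw0 : w < 0 := by
    have h : Real.exp (-x) < Real.exp 0 := Real.exp_lt_exp.mpr (by linarith)
    rw [hw]; simp only [Real.exp_zero] at h; linarith
  have hA : 0 < c^2 + 4*w := by linarith
  set s : ℝ := Real.sqrt (c^2 + 4*w) with hsdef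
  have hs0 : 0 < s := Real.sqrt_pos.mpr hA
  have hs2 : s^2 = c^2 + 4*w := Real.sq_sqrt hA.le
  set D : ℝ := 1 + 0.5 * (1 - 2/c^2) * x with hDdef
  set M : ℝ := c^2 + (c^2-2)/2 * x with hMdef
  have hDM : D * c^2 = M := by
    rw [hDdef, hMdef]
    have : c^2 ≠ 0 := by positivity
    field_simp
    ring
  have h2c : 2/c^2 ≤ 1/2 := by
    rw [div_le_div_iff₀ (by positivity) (by norm_num)]
    linarith
  have hD : 0 < D := by
    rw [hDdef]
    nlinarith [mul_pos (show (0:ℝ) < 1 - 2/c^2 by linarith) hx]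
  have hM : 0 < M := by rw [← hDM]; positivity
  have key2 : D*c^2 - 2*x < D*c*s := by
    rcases le_or_gt (D*c^2 - 2*x) 0 with hcase | hcase
    · have : 0 < D*c*s := by positivity
      linarith
    · have hgpos : 0 < (2+x)*w + 2*x := by
        have hla := lemA hx
        have hwx : Real.exp (-x) = w + 1 := by rw [hw]; ring
        rw [hwx] at hla
        nlinarith
      have hgM : 2*x^3 < M^2 * ((2+x)*w + 2*x) := by
        rcases le_or_gt 4 x with hx4 | hx4
        · -- x ≥ 4
          have hM2x : 2*x < M := by rw [← hDM]; linarith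
          have hgx : x - 2 < (2+x)*w + 2*x := by
            nlinarith [mul_pos (show (0:ℝ) < 2+x by linarith) (show (0:ℝ) < w+1 by linarith)]
          have hMsq : 4*x^2 < M^2 := by
            nlinarith [mul_pos (sub_pos.mpr hM2x) (show (0:ℝ) < M + 2*x by linarith)]
          nlinarith [mul_lt_mul_of_pos_right hMsq hgpos,
            mul_lt_mul_of_pos_left hgx (show (0:ℝ) < 4*x^2 by positivity),
            mul_nonneg (sq_nonneg x) (show (0:ℝ) ≤ x - 4 by linarith)]
        · -- x < 4
          have hb : 4 - x < (4+x) * Real.exp (-(x/2)) := by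
            have h := lemA (show (0:ℝ) < x/2 by linarith)
            linarith
          have hee : Real.exp (-(x/2)) * Real.exp (-(x/2)) = w + 1 := by
            rw [← Real.exp_add, hw]
            rw [show -(x/2) + -(x/2) = -x by ring]
            ring
          have hb2 : (4-x)^2 < (4+x)^2 * (w+1) := by
            have hsq := mul_self_lt_mul_self (show (0:ℝ) ≤ 4 - x by linarith) hb
            have hq : ((4+x)*Real.exp (-(x/2))) * ((4+x)*Real.exp (-(x/2)))
                = (4+x)^2*(w+1) := by
              rw [show ((4+x)*Real.exp (-(x/2))) * ((4+x)*Real.exp (-(x/2)))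
                  = (4+x)^2*(Real.exp (-(x/2)) * Real.exp (-(x/2))) by ring, hee]
            calc (4-x)^2 = (4-x)*(4-x) := by ring
              _ < _ := hsq
              _ = (4+x)^2*(w+1) := hq
          have h5 : 2*x^3 < (4+x)^2 * ((2+x)*w + 2*x) := by
            nlinarith [mul_pos (show (0:ℝ) < 2+x by linarith)
              (show (0:ℝ) < (4+x)^2*(w+1) - (4-x)^2 by linarith)]
          have hMx : 4 + x ≤ M := by
            rw [hMdef]
            nlinarith [mul_nonneg (show (0:ℝ) ≤ c^2 - 4 by linarith) hx.le]
          have h6 : (4+x)^2 * ((2+x)*w + 2*x) ≤ M^2 * ((2+x)*w + 2*x) := by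
            apply mul_le_mul_of_nonneg_right _ hgpos.le
            nlinarith [hMx, hx]
          linarith
      have hP : c^2*(M-2*x)^2 < M^2*(c^2+4*w) := by
        have h1 : 0 < M^2*((2+x)*w+2*x) - 2*x^3 := by linarith
        rw [hMdef] at h1 ⊢
        nlinarith [h1, hx, mul_pos hx h1]
      have hsq2 : (D*c^2 - 2*x)^2 < (D*c*s)^2 := by
        have h2 : (D*c*s)^2 = D^2*c^2*(c^2+4*w) := by rw [← hs2]; ring
        have h3 : c^2 * (D^2*c^2*(c^2+4*w)) = M^2*(c^2+4*w) := by rw [← hDM]; ring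
        have h4 : D*c^2 - 2*x = M - 2*x := by rw [hDM]
        rw [h4, h2]
        have h5 : c^2*((M-2*x)^2) < c^2*(D^2*c^2*(c^2+4*w)) := by linarith [hP, h3]
        exact lt_of_mul_lt_mul_left h5 (by positivity)
      have hpos : 0 < D*c*s := by positivity
      nlinarith [hsq2, hcase, hpos]
  clear_value w s D M
  rw [gt_iff_lt, div_lt_iff₀ hD]
  have hτ0 : 0 < τ := by linarith
  have hkey : 0 < τ * (D*c*s - (D*c^2 - 2*x)) :=
    mul_pos hτ0 (by linarith)
  have hre : τ * c * ((-c + s) / 2) * D = (τ * (D*c*s - D*c^2))/2 := by ring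
  linarith [hkey, hre]
end

section
/- Let c ≥ 2, τ ∈ (1, 3/2], and define A₋(x) = x + ρ(x) + (1/ρ(x))·∫_x^0 ρ(s) ds for x ≠ 0 and A₋(0) = 0, where ρ(x) = τ·c·f(e^{-x}-1). Then A₋ extends continuously to 0 with A₋'(0) = 1/2 - τ and A₋''(0) = (τ - 1/6)(1 - 2/c²). -/
noncomputable def Aminus (c τ x : ℝ) : ℝ :=
  if x = 0 then 0 else x + ρ c τ x + (1 / ρ c τ x) * ∫ s in x..0, ρ c τ s

namespace Stmt8

open Real Filter Set Topology

noncomputable def g (c x : ℝ) : ℝ := c^2 - 4 + 4 * Real.exp (-x)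
noncomputable def ρ1 (c τ x : ℝ) : ℝ := -(τ * c) * (Real.exp (-x) / Real.sqrt (g c x))
noncomputable def ρ2 (c τ x : ℝ) : ℝ :=
  -(τ * c) * ((Real.exp (-x) * (-1) * Real.sqrt (g c x) -
    Real.exp (-x) * ((-4 * Real.exp (-x)) / (2 * Real.sqrt (g c x)))) / Real.sqrt (g c x) ^ 2)
noncomputable def II (c τ x : ℝ) : ℝ := ∫ s in x..0, ρ c τ s
noncomputable def B (c τ x : ℝ) : ℝ := if x = 0 then 0 else II c τ x / ρ c τ x
noncomputable def N (c τ x : ℝ) : ℝ := -(ρ c τ x)^2/2 - II c τ x * ρ1 c τ x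
noncomputable def A1 (c τ x : ℝ) : ℝ :=
  if x = 0 then 1/2 - τ else 1 + ρ1 c τ x + (-1 - II c τ x * ρ1 c τ x / (ρ c τ x)^2)

variable {c τ : ℝ}

lemma hg_pos (hc : 2 ≤ c) (x : ℝ) : 0 < g c x := by
  have h := Real.exp_pos (-x)
  have h2 : (4:ℝ) ≤ c^2 := by nlinarith
  simp only [g]; nlinarith

lemma sqrt_g_pos (hc : 2 ≤ c) (x : ℝ) : 0 < Real.sqrt (g c x) :=
  Real.sqrt_pos.2 (hg_pos hc x)

lemma sq_sqrt_g (hc : 2 ≤ c) (x : ℝ) : Real.sqrt (g c x) ^ 2 = g c x :=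
  Real.sq_sqrt (hg_pos hc x).le

lemma sqrt_g_zero (hc : 2 ≤ c) : Real.sqrt (g c 0) = c := by
  have h : g c 0 = c^2 := by simp [g]
  rw [h, Real.sqrt_sq (by linarith)]

lemma rho_eq (x : ℝ) : ρ c τ x = τ * c * ((Real.sqrt (g c x) - c) / 2) := by
  have h : c^2 + 4*(Real.exp (-x) - 1) = g c x := by simp [g]; ring
  simp only [ρ, f, h]; ring

lemma rho_zero (hc : 2 ≤ c) : ρ c τ 0 = 0 := by
  rw [rho_eq, sqrt_g_zero hc]; ring

lemma hasDerivAt_g (x : ℝ) : HasDerivAt (g c) (-4 * Real.exp (-x)) x := by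
  have h1 : HasDerivAt (fun y : ℝ => Real.exp (-y)) (Real.exp (-x) * (-1)) x :=
    (hasDerivAt_neg' x).exp
  have h2 := (h1.const_mul 4).const_add (c^2 - 4)
  refine h2.congr_deriv ?_; ring

lemma hasDerivAt_sqrtg (hc : 2 ≤ c) (x : ℝ) :
    HasDerivAt (fun y => Real.sqrt (g c y)) ((-4 * Real.exp (-x)) / (2 * Real.sqrt (g c x))) x :=
  (hasDerivAt_g x).sqrt (hg_pos hc x).ne'

lemma hasDerivAt_rho (hc : 2 ≤ c) (x : ℝ) : HasDerivAt (ρ c τ) (ρ1 c τ x) x := by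
  have h := (((hasDerivAt_sqrtg hc x).sub_const c).div_const 2).const_mul (τ * c)
  have heq : (fun y => τ * c * ((Real.sqrt (g c y) - c) / 2)) = ρ c τ := by
    funext y; rw [rho_eq]
  rw [heq] at h
  refine h.congr_deriv ?_
  have hs := (sqrt_g_pos hc x).ne'
  simp only [ρ1]
  field_simp
  ring

lemma rho1_zero (hc : 2 ≤ c) : ρ1 c τ 0 = -τ := by
  have h2 : c ≠ 0 := by linarith
  simp only [ρ1, sqrt_g_zero hc, neg_zero, Real.exp_zero]
  field_simp

lemma rho1_neg (hc : 2 ≤ c) (hτ0 : 0 < τ) (x : ℝ) : ρ1 c τ x < 0 := by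
  have h1 := Real.exp_pos (-x)
  have h2 := sqrt_g_pos hc x
  have h3 : (0:ℝ) < c := by linarith
  have h4 : 0 < Real.exp (-x) / Real.sqrt (g c x) := div_pos h1 h2
  simp only [ρ1]
  nlinarith [mul_pos (mul_pos hτ0 h3) h4]

lemma rho_ne (hc : 2 ≤ c) (hτ0 : 0 < τ) {x : ℝ} (hx : x ≠ 0) : ρ c τ x ≠ 0 := by
  have hanti : StrictAnti (ρ c τ) := by
    apply strictAnti_of_deriv_neg
    intro y
    rw [(hasDerivAt_rho hc y).deriv]
    exact rho1_neg hc hτ0 y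
  intro h
  exact hx (hanti.injective (h.trans (rho_zero hc).symm))

lemma hasDerivAt_rho1 (hc : 2 ≤ c) (x : ℝ) : HasDerivAt (ρ1 c τ) (ρ2 c τ x) x := by
  have h1 : HasDerivAt (fun y : ℝ => Real.exp (-y)) (Real.exp (-x) * (-1)) x :=
    (hasDerivAt_neg' x).exp
  exact (h1.div (hasDerivAt_sqrtg hc x) (sqrt_g_pos hc x).ne').const_mul (-(τ * c))

lemma rho2_zero (hc : 2 ≤ c) : ρ2 c τ 0 = τ * (1 - 2/c^2) := by
  have h2 : c ≠ 0 := by linarith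
  simp only [ρ2, sqrt_g_zero hc, neg_zero, Real.exp_zero]
  field_simp
  ring

lemma cont_sqrtg : Continuous (fun x => Real.sqrt (g c x)) := by
  apply Real.continuous_sqrt.comp
  unfold g; continuity

lemma cont_rho2_at0 (hc : 2 ≤ c) : ContinuousAt (ρ2 c τ) 0 := by
  have h1 : Continuous (fun x : ℝ => Real.exp (-x)) := by continuity
  have h2 : ContinuousAt (fun x => Real.sqrt (g c x)) 0 := cont_sqrtg.continuousAt
  have hs0 : Real.sqrt (g c 0) ≠ 0 := (sqrt_g_pos hc 0).ne'
  apply ContinuousAt.mul continuousAt_const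
  apply ContinuousAt.div
  · apply ContinuousAt.sub
    · exact ((h1.continuousAt.mul continuousAt_const).mul h2)
    · apply ContinuousAt.mul h1.continuousAt
      apply ContinuousAt.div (by fun_prop) (continuousAt_const.mul h2)
      simpa using hs0
  · exact h2.pow 2
  · exact pow_ne_zero 2 hs0

lemma cont_rho (hc : 2 ≤ c) : Continuous (ρ c τ) := by
  have h : Differentiable ℝ (ρ c τ) := fun x => (hasDerivAt_rho hc x).differentiableAt
  exact h.continuous

lemma hasDerivAt_II (hc : 2 ≤ c) (x : ℝ) : HasDerivAt (II c τ) (-(ρ c τ x)) x :=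
  intervalIntegral.integral_hasDerivAt_left ((cont_rho hc).intervalIntegrable _ _)
    ((cont_rho hc).stronglyMeasurableAtFilter _ _) (cont_rho hc).continuousAt

lemma II_zero : II c τ 0 = 0 := intervalIntegral.integral_same

lemma hu (hc : 2 ≤ c) : Tendsto (fun x => ρ c τ x / x) (𝓝[≠] (0:ℝ)) (𝓝 (-τ)) := by
  have h := hasDerivAt_rho (τ := τ) hc 0
  rw [rho1_zero hc] at h
  rw [hasDerivAt_iff_tendsto_slope] at h
  refine h.congr' ?_
  filter_upwards [self_mem_nhdsWithin] with x hx
  simp [slope, rho_zero hc, div_eq_mul_inv]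
  ring

lemma hv (hc : 2 ≤ c) : Tendsto (fun x => II c τ x / x^2) (𝓝[≠] (0:ℝ)) (𝓝 (τ/2)) := by
  have key : Tendsto (fun x => -(ρ c τ x) / (2*x)) (𝓝[≠] (0:ℝ)) (𝓝 (τ/2)) := by
    have h := ((hu (τ := τ) hc).neg).div_const 2
    rw [show -(-τ)/2 = τ/2 by ring] at h
    refine h.congr (fun x => ?_)
    ring
  apply HasDerivAt.lhopital_zero_nhdsNE (f' := fun x => -(ρ c τ x)) (g' := fun x => 2*x)
  · filter_upwards with x; exact hasDerivAt_II hc x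
  · filter_upwards with x
    simpa using (hasDerivAt_pow 2 x)
  · filter_upwards [self_mem_nhdsWithin] with x hx
    simp only [mem_compl_iff, mem_singleton_iff] at hx
    positivity
  · have h := (hasDerivAt_II (τ := τ) hc 0).differentiableAt.continuousAt.tendsto
    rw [II_zero] at h
    exact h.mono_left nhdsWithin_le_nhds
  · have h : Tendsto (fun x : ℝ => x^2) (𝓝 0) (𝓝 0) := by
      have := (continuous_pow 2).tendsto (0:ℝ); simpa using this
    exact h.mono_left nhdsWithin_le_nhds
  · exact key

lemma hasDerivAt_N (hc : 2 ≤ c) (x : ℝ) :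
    HasDerivAt (N c τ) (-(II c τ x * ρ2 c τ x)) x := by
  have h1 := ((hasDerivAt_rho (τ := τ) hc x).pow 2).neg.div_const 2
  have h2 := (hasDerivAt_II (τ := τ) hc x).mul (hasDerivAt_rho1 (τ := τ) hc x)
  have h := h1.sub h2
  refine h.congr_deriv ?_
  push_cast
  ring

lemma N_zero (hc : 2 ≤ c) : N c τ 0 = 0 := by
  simp [N, rho_zero hc, II_zero]

lemma hNlim (hc : 2 ≤ c) :
    Tendsto (fun x => N c τ x / x^3) (𝓝[≠] (0:ℝ))
      (𝓝 (-(τ * (τ * (1 - 2/c^2))) / 6)) := by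
  have key : Tendsto (fun x => -(II c τ x * ρ2 c τ x) / (3*x^2)) (𝓝[≠] (0:ℝ))
      (𝓝 (-(τ * (τ * (1 - 2/c^2))) / 6)) := by
    have hρ2 : Tendsto (ρ2 c τ) (𝓝[≠] (0:ℝ)) (𝓝 (τ * (1 - 2/c^2))) := by
      have := (cont_rho2_at0 (τ := τ) hc).tendsto
      rw [rho2_zero hc] at this
      exact this.mono_left nhdsWithin_le_nhds
    have h := ((hv (τ := τ) hc).mul hρ2).neg.div_const 3
    have heq : -(τ/2 * (τ * (1 - 2/c^2))) / 3 = -(τ * (τ * (1 - 2/c^2))) / 6 := by ring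
    rw [heq] at h
    refine h.congr (fun x => ?_)
    ring
  apply HasDerivAt.lhopital_zero_nhdsNE
      (f' := fun x => -(II c τ x * ρ2 c τ x)) (g' := fun x => 3*x^2)
  · filter_upwards with x; exact hasDerivAt_N hc x
  · filter_upwards with x
    have := hasDerivAt_pow 3 x
    norm_num at this
    exact this
  · filter_upwards [self_mem_nhdsWithin] with x hx
    simp only [mem_compl_iff, mem_singleton_iff] at hx
    positivity
  · have hcont : ContinuousAt (N c τ) 0 := (hasDerivAt_N (τ := τ) hc 0).differentiableAt.continuousAt
    have h := hcont.tendsto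
    rw [N_zero hc] at h
    exact h.mono_left nhdsWithin_le_nhds
  · have h : Tendsto (fun x : ℝ => x^3) (𝓝 0) (𝓝 0) := by
      have := (continuous_pow 3).tendsto (0:ℝ); simpa using this
    exact h.mono_left nhdsWithin_le_nhds
  · exact key

lemma hB (hc : 2 ≤ c) (hτ0 : 0 < τ) (hτ1 : 1 < τ) :
    HasDerivAt (B c τ) (-(1/2)) 0 := by
  rw [hasDerivAt_iff_tendsto_slope]
  have hτ' : (-τ) ≠ 0 := by linarith
  have h := (hv (τ := τ) hc).div (hu (τ := τ) hc) hτ'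
  have heq : τ/2 / (-τ) = -(1/2) := by field_simp
  rw [heq] at h
  refine h.congr' ?_
  filter_upwards [self_mem_nhdsWithin] with x hx
  simp only [mem_compl_iff, mem_singleton_iff] at hx
  have hρ := rho_ne hc hτ0 hx
  simp only [Pi.div_apply, slope, B, if_neg hx, if_true, reduceIte, vsub_eq_sub, sub_zero,
    smul_eq_mul]
  field_simp

lemma Aminus_eq (hc : 2 ≤ c) : Aminus c τ = fun x => x + ρ c τ x + B c τ x := by
  funext x
  by_cases hx : x = 0
  · subst hx
    simp [Aminus, B, rho_zero hc]
  · simp only [Aminus, B, if_neg hx, II]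
    rw [one_div, inv_mul_eq_div]

lemma hA0 (hc : 2 ≤ c) (hτ0 : 0 < τ) (hτ1 : 1 < τ) :
    HasDerivAt (Aminus c τ) (1/2 - τ) 0 := by
  rw [Aminus_eq hc]
  have h1 := hasDerivAt_rho (τ := τ) hc 0
  rw [rho1_zero hc] at h1
  have h := ((hasDerivAt_id 0).add h1).add (hB hc hτ0 hτ1)
  refine h.congr_deriv ?_
  ring

lemma deriv_Aminus (hc : 2 ≤ c) (hτ0 : 0 < τ) (hτ1 : 1 < τ) :
    deriv (Aminus c τ) = A1 c τ := by
  funext x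
  by_cases hx : x = 0
  · subst hx
    rw [(hA0 hc hτ0 hτ1).deriv]
    simp [A1]
  · have hρ := rho_ne hc hτ0 hx
    have hev : Aminus c τ =ᶠ[𝓝 x] fun y => y + ρ c τ y + II c τ y / ρ c τ y := by
      filter_upwards [isOpen_compl_singleton.mem_nhds hx] with y hy
      simp only [mem_compl_iff, mem_singleton_iff] at hy
      simp only [Aminus, if_neg hy, II]
      rw [one_div, inv_mul_eq_div]
    have hq := (hasDerivAt_II (τ := τ) hc x).div (hasDerivAt_rho hc x) hρ
    have h := ((hasDerivAt_id x).add (hasDerivAt_rho (τ := τ) hc x)).add hq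
    have h2 : HasDerivAt (Aminus c τ) (A1 c τ x) x := by
      refine HasDerivAt.congr_of_eventuallyEq ?_ hev
      refine h.congr_deriv ?_
      simp only [A1, if_neg hx]
      field_simp
    exact h2.deriv

lemma hA1 (hc : 2 ≤ c) (hτ0 : 0 < τ) (hτ1 : 1 < τ) :
    HasDerivAt (A1 c τ) ((τ - 1/6) * (1 - 2/c^2)) 0 := by
  have hc0 : (0:ℝ) < c := by linarith
  rw [hasDerivAt_iff_tendsto_slope]
  -- term 1 : slope of ρ1 at 0 tends to ρ2 0
  have ht1 : Tendsto (fun x => (ρ1 c τ x + τ) / x) (𝓝[≠] (0:ℝ)) (𝓝 (τ * (1 - 2/c^2))) := by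
    have h := hasDerivAt_rho1 (τ := τ) hc 0
    rw [rho2_zero hc, hasDerivAt_iff_tendsto_slope] at h
    refine h.congr' ?_
    filter_upwards [self_mem_nhdsWithin] with x hx
    simp [slope, rho1_zero hc, div_eq_mul_inv, sub_neg_eq_add]
    ring
  -- term 2
  have hτsq : (-τ)^2 ≠ 0 := pow_ne_zero 2 (by linarith : (-τ) ≠ 0)
  have ht2 : Tendsto (fun x => (-(1/2) - II c τ x * ρ1 c τ x / (ρ c τ x)^2) / x)
      (𝓝[≠] (0:ℝ)) (𝓝 (-(τ * (1 - 2/c^2)) / (6 * τ))) := by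
    have hpow : Tendsto (fun x => (ρ c τ x / x)^2) (𝓝[≠] (0:ℝ)) (𝓝 ((-τ)^2)) :=
      (hu (τ := τ) hc).pow 2
    have h := (hNlim (τ := τ) hc).div hpow hτsq
    have heq : -(τ * (τ * (1 - 2/c^2))) / 6 / (-τ)^2 = -(τ * (1 - 2/c^2)) / (6 * τ) := by
      have : τ ≠ 0 := by linarith
      field_simp
    rw [heq] at h
    refine h.congr' ?_
    filter_upwards [self_mem_nhdsWithin] with x hx
    simp only [mem_compl_iff, mem_singleton_iff] at hx
    have hρ := rho_ne hc hτ0 hx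
    simp only [N, Pi.div_apply]
    field_simp
  have hsum := ht1.add ht2
  have hval : τ * (1 - 2/c^2) + -(τ * (1 - 2/c^2)) / (6 * τ) = (τ - 1/6) * (1 - 2/c^2) := by
    have hτ' : τ ≠ 0 := by linarith
    field_simp
    ring
  rw [hval] at hsum
  refine hsum.congr' ?_
  filter_upwards [self_mem_nhdsWithin] with x hx
  simp only [mem_compl_iff, mem_singleton_iff] at hx
  simp only [slope, A1, if_neg hx, if_true, reduceIte, vsub_eq_sub, sub_zero, smul_eq_mul]
  ring

end Stmt8

theorem stmt8 (c τ : ℝ) (hc : 2 ≤ c) (hτ : τ ∈ Set.Ioc (1 : ℝ) (3/2)) :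
    ContinuousAt (Aminus c τ) 0 ∧
    deriv (Aminus c τ) 0 = 1/2 - τ ∧
    deriv (deriv (Aminus c τ)) 0 = (τ - 1/6) * (1 - 2/c^2) := by
  have hτ1 : 1 < τ := hτ.1
  have hτ0 : 0 < τ := by linarith
  refine ⟨(Stmt8.hA0 hc hτ0 hτ1).continuousAt, (Stmt8.hA0 hc hτ0 hτ1).deriv, ?_⟩
  rw [Stmt8.deriv_Aminus hc hτ0 hτ1]
  exact (Stmt8.hA1 hc hτ0 hτ1).deriv
end

section
/- Let c ≥ 2 and τ ∈ (1, 3/2], ρ(x) = τ·c·f(e^{-x} - 1), and A₋(x) = x + ρ(x) + (1/ρ(x))·∫_x^0 ρ(s) ds. Then A₋'(x) < 0 for every x with x/ρ(x) > -1 (equivalently for every x < x̄₂, where x̄₂ is the unique positive solution of -ρ(x) = x). -/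
open Real Filter Topology

lemma arg_pos (c : ℝ) (hc : 2 ≤ c) (x : ℝ) : 0 < c^2 + 4*(Real.exp (-x) - 1) := by
  nlinarith [Real.exp_pos (-x)]

lemma rho_zero (c τ : ℝ) (hc : 2 ≤ c) : ρ c τ 0 = 0 := by
  have h : Real.sqrt (c^2 + 4*(Real.exp (-(0:ℝ)) - 1)) = c := by
    rw [show c^2 + 4*(Real.exp (-(0:ℝ)) - 1) = c^2 by simp]
    exact Real.sqrt_sq (by linarith)
  unfold ρ f
  rw [h]
  ring

lemma rho_anti (c τ : ℝ) (hc : 2 ≤ c) (hτ : 0 < τ) : StrictAnti (ρ c τ) := by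
  intro a b hab
  have h1 : Real.exp (-b) < Real.exp (-a) := Real.exp_lt_exp.2 (by linarith)
  have h2 : Real.sqrt (c^2 + 4*(Real.exp (-b) - 1)) < Real.sqrt (c^2 + 4*(Real.exp (-a) - 1)) :=
    Real.sqrt_lt_sqrt (le_of_lt (arg_pos c hc b)) (by linarith)
  have hτc : 0 < τ * c := mul_pos hτ (by linarith)
  unfold ρ f
  nlinarith [mul_pos hτc (sub_pos.2 h2)]

lemma rho_cont (c τ : ℝ) : Continuous (ρ c τ) := by
  unfold ρ f
  fun_prop

lemma rho_ne (c τ x : ℝ) (hc : 2 ≤ c) (hτ : 0 < τ) (hx : x ≠ 0) : ρ c τ x ≠ 0 := by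
  rcases hx.lt_or_gt with h | h
  · have := rho_anti c τ hc hτ h
    rw [rho_zero c τ hc] at this; linarith
  · have := rho_anti c τ hc hτ h
    rw [rho_zero c τ hc] at this; linarith

lemma rho_hasDeriv (c τ : ℝ) (hc : 2 ≤ c) (x : ℝ) :
    HasDerivAt (ρ c τ)
      (-(τ * c * Real.exp (-x) / Real.sqrt (c^2 + 4*(Real.exp (-x) - 1)))) x := by
  have h0 := arg_pos c hc x
  have hs : 0 < Real.sqrt (c^2 + 4*(Real.exp (-x) - 1)) := Real.sqrt_pos.2 h0
  have h1 : HasDerivAt (fun y : ℝ => Real.exp (-y)) (-Real.exp (-x)) x := by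
    simpa [Function.comp_def] using (Real.hasDerivAt_exp (-x)).comp x (hasDerivAt_neg x)
  have h2 : HasDerivAt (fun y : ℝ => c^2 + 4*(Real.exp (-y) - 1)) (4 * -Real.exp (-x)) x := by
    simpa using ((h1.sub_const 1).const_mul 4).const_add (c^2)
  have h3 : HasDerivAt (fun y : ℝ => Real.sqrt (c^2 + 4*(Real.exp (-y) - 1)))
      (1 / (2 * Real.sqrt (c^2 + 4*(Real.exp (-x) - 1))) * (4 * -Real.exp (-x))) x :=
    (Real.hasDerivAt_sqrt (ne_of_gt h0)).comp x h2
  have h4 : HasDerivAt (ρ c τ)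
      (τ * c * (1 / (2 * Real.sqrt (c^2 + 4*(Real.exp (-x) - 1))) * (4 * -Real.exp (-x)) / 2)) x := by
    unfold ρ f
    exact ((h3.const_add (-c)).div_const 2).const_mul (τ*c)
  convert h4 using 1
  field_simp
  ring

lemma rho_deriv_neg (c τ : ℝ) (hc : 2 ≤ c) (hτ : 0 < τ) (x : ℝ) :
    -(τ * c * Real.exp (-x) / Real.sqrt (c^2 + 4*(Real.exp (-x) - 1))) < 0 := by
  have hs : 0 < Real.sqrt (c^2 + 4*(Real.exp (-x) - 1)) := Real.sqrt_pos.2 (arg_pos c hc x)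
  have : 0 < τ * c * Real.exp (-x) / Real.sqrt (c^2 + 4*(Real.exp (-x) - 1)) := by
    have hc0 : (0:ℝ) < c := by linarith
    have he := Real.exp_pos (-x)
    positivity
  linarith

lemma I_hasDeriv (c τ x : ℝ) :
    HasDerivAt (fun y => ∫ s in y..0, ρ c τ s) (-(ρ c τ x)) x :=
  intervalIntegral.integral_hasDerivAt_left ((rho_cont c τ).intervalIntegrable x 0)
    ((rho_cont c τ).stronglyMeasurableAtFilter _ _) (rho_cont c τ).continuousAt

lemma I_le (c τ x : ℝ) (hc : 2 ≤ c) (hτ : 0 < τ) :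
    (∫ s in x..0, ρ c τ s) ≤ -x * ρ c τ x := by
  have hanti := (rho_anti c τ hc hτ).antitone
  rcases le_or_gt x 0 with h | h
  · have : (∫ s in x..0, ρ c τ s) ≤ ∫ _ in x..0, ρ c τ x := by
      apply intervalIntegral.integral_mono_on h ((rho_cont c τ).intervalIntegrable x 0)
        (intervalIntegrable_const)
      intro s hs
      exact hanti hs.1
    simpa using this
  · rw [intervalIntegral.integral_symm]
    have : (∫ _ in (0:ℝ)..x, ρ c τ x) ≤ ∫ s in (0:ℝ)..x, ρ c τ s := by
      apply intervalIntegral.integral_mono_on h.le intervalIntegrable_const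
        ((rho_cont c τ).intervalIntegrable 0 x)
      intro s hs
      exact hanti hs.2
    simp only [intervalIntegral.integral_const, smul_eq_mul, sub_zero] at this
    linarith

lemma deriv_ne_zero_case (c τ : ℝ) (hc : 2 ≤ c) (hτ : 0 < τ) (x : ℝ) (hx0 : x ≠ 0)
    (hx : x / ρ c τ x > -1) : deriv (Aminus c τ) x < 0 := by
  set r := ρ c τ x with hrdef
  have hr : r ≠ 0 := rho_ne c τ x hc hτ hx0
  have hr2 : 0 < r^2 := by positivity
  set I : ℝ → ℝ := fun y => ∫ s in y..0, ρ c τ s with hIdef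
  -- the hypothesis gives -x*r < r^2
  have hxr : -x * r < r^2 := by
    have h1 : 0 < (x/r + 1) * r^2 := mul_pos (by linarith) hr2
    have h2 : (x/r + 1) * r^2 = x*r + r^2 := by field_simp
    nlinarith [h1, h2]
  have hI2 : I x < r^2 := lt_of_lt_of_le' hxr (by simpa using I_le c τ x hc hτ)
  set p := -(τ * c * Real.exp (-x) / Real.sqrt (c^2 + 4*(Real.exp (-x) - 1))) with hpdef
  have hp : p < 0 := rho_deriv_neg c τ hc hτ x
  have hρd : HasDerivAt (ρ c τ) p x := rho_hasDeriv c τ hc x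
  have hinv : HasDerivAt (fun y => (ρ c τ y)⁻¹) (-p / r^2) x := hρd.inv hr
  have hmul : HasDerivAt (fun y => (ρ c τ y)⁻¹ * I y)
      (-p / r^2 * I x + r⁻¹ * -(ρ c τ x)) x := hinv.mul (I_hasDeriv c τ x)
  have htot : HasDerivAt (fun y => y + ρ c τ y + (ρ c τ y)⁻¹ * I y)
      (1 + p + (-p / r^2 * I x + r⁻¹ * -(ρ c τ x))) x :=
    ((hasDerivAt_id x).add hρd).add hmul
  have hev : Aminus c τ =ᶠ[𝓝 x] fun y => y + ρ c τ y + (ρ c τ y)⁻¹ * I y := by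
    filter_upwards [eventually_ne_nhds hx0] with y hy
    simp [Aminus, hy, one_div, hIdef]
  rw [hev.deriv_eq, htot.deriv]
  have heq : 1 + p + (-p / r^2 * I x + r⁻¹ * -(ρ c τ x)) = p * (1 - I x / r^2) := by
    rw [← hrdef]
    field_simp
    ring
  rw [heq]
  apply mul_neg_of_neg_of_pos hp
  rw [sub_pos]
  exact (div_lt_one hr2).2 hI2

lemma deriv_zero_case (c τ : ℝ) (hc : 2 ≤ c) (hτ1 : 1 < τ) :
    deriv (Aminus c τ) 0 < 0 := by
  have hτ : 0 < τ := by linarith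
  have hτne : τ ≠ 0 := by linarith
  set I : ℝ → ℝ := fun y => ∫ s in y..0, ρ c τ s with hIdef
  have hρ0 : HasDerivAt (ρ c τ) (-τ) 0 := by
    have h := rho_hasDeriv c τ hc 0
    have hs : Real.sqrt (c^2 + 4*(Real.exp (-(0:ℝ)) - 1)) = c := by
      rw [show c^2 + 4*(Real.exp (-(0:ℝ)) - 1) = c^2 by simp]
      exact Real.sqrt_sq (by linarith)
    rw [hs] at h
    have hcne : c ≠ 0 := by linarith
    convert h using 1
    simp only [neg_neg, neg_inj, Real.exp_zero, mul_one]
    field_simp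
    simp
  have T1 : Tendsto (fun h => ρ c τ h / h) (𝓝[≠] (0:ℝ)) (𝓝 (-τ)) := by
    have := hasDerivAt_iff_tendsto_slope.1 hρ0
    refine this.congr fun h => ?_
    rw [slope_def_field, rho_zero c τ hc, sub_zero, sub_zero]
  have T2 : Tendsto (fun h => h / ρ c τ h) (𝓝[≠] (0:ℝ)) (𝓝 (-τ)⁻¹) := by
    have := T1.inv₀ (by simpa using hτne)
    refine this.congr fun h => ?_
    rw [← one_div, one_div_div]
  have T3 : Tendsto (fun h => I h / h^2) (𝓝[≠] (0:ℝ)) (𝓝 (τ/2)) := by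
    apply HasDerivAt.lhopital_zero_nhdsNE (f' := fun h => -(ρ c τ h)) (g' := fun h => 2*h)
    · exact Eventually.of_forall fun y => I_hasDeriv c τ y
    · exact Eventually.of_forall fun y => by simpa using hasDerivAt_pow 2 y
    · filter_upwards [self_mem_nhdsWithin] with y hy
      simp only [Set.mem_compl_iff, Set.mem_singleton_iff] at hy
      intro h; apply hy; linarith
    · have : Tendsto I (𝓝 (0:ℝ)) (𝓝 (I 0)) := (I_hasDeriv c τ 0).continuousAt.tendsto
      have hI0 : I 0 = 0 := intervalIntegral.integral_same
      rw [hI0] at this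
      exact this.mono_left nhdsWithin_le_nhds
    · have : Tendsto (fun h : ℝ => h^2) (𝓝 (0:ℝ)) (𝓝 ((0:ℝ)^2)) :=
        (continuous_pow 2).tendsto 0
      simpa using this.mono_left nhdsWithin_le_nhds
    · have := (T1.neg).div_const 2
      have hval : -(-τ)/2 = τ/2 := by ring
      rw [hval] at this
      refine this.congr fun h => ?_
      ring
  have T4 : Tendsto (fun h => I h / (h * ρ c τ h)) (𝓝[≠] (0:ℝ)) (𝓝 (τ/2 * (-τ)⁻¹)) := by
    have := T3.mul T2
    refine this.congr' ?_
    filter_upwards [self_mem_nhdsWithin] with y hy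
    simp only [Set.mem_compl_iff, Set.mem_singleton_iff] at hy
    have hρy : ρ c τ y ≠ 0 := rho_ne c τ y hc hτ hy
    field_simp
  have Ttot : Tendsto (slope (Aminus c τ) 0) (𝓝[≠] (0:ℝ)) (𝓝 (1 + -τ + τ/2 * (-τ)⁻¹)) := by
    have := ((tendsto_const_nhds :  Tendsto (fun _ : ℝ => (1:ℝ)) (𝓝[≠] (0:ℝ)) (𝓝 1)).add T1).add T4
    refine this.congr' ?_
    filter_upwards [self_mem_nhdsWithin] with y hy
    simp only [Set.mem_compl_iff, Set.mem_singleton_iff] at hy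
    have hρy : ρ c τ y ≠ 0 := rho_ne c τ y hc hτ hy
    have hA0 : Aminus c τ 0 = 0 := by simp [Aminus]
    have hAy : Aminus c τ y = y + ρ c τ y + (1 / ρ c τ y) * I y := by
      simp [Aminus, hy, hIdef]
    rw [slope_def_field, hA0, hAy]
    field_simp
    ring
  have hval : 1 + -τ + τ/2 * (-τ)⁻¹ = 1/2 - τ := by
    field_simp
    ring
  rw [hval] at Ttot
  have hD : HasDerivAt (Aminus c τ) (1/2 - τ) 0 := hasDerivAt_iff_tendsto_slope.2 Ttot
  rw [hD.deriv]
  linarith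

theorem stmt9 (c τ : ℝ) (hc : 2 ≤ c) (hτ : τ ∈ Set.Ioc (1 : ℝ) (3/2)) :
    ∀ x : ℝ, x / ρ c τ x > -1 → deriv (Aminus c τ) x < 0 := by
  intro x hx
  rcases eq_or_ne x 0 with rfl | hx0
  · exact deriv_zero_case c τ hc hτ.1
  · exact deriv_ne_zero_case c τ hc (by linarith [hτ.1]) x hx0 hx
end
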